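/- Let B be the division quaternion algebra over ℚ_ℓ with valuation w = ν ∘ Nrd. Then O = {x ∈ B : w(x) ≥ 0} ∪ {0} is a subring of B, and it is the unique maximal order of B. -/

import Mathlib

open scoped Quaternion

/-- An order of the quaternion algebra B over ℚ_ℓ: a subring that is a ℤ_ℓ-lattice,
i.e. (since ℤ_ℓ is a PID) the set of points whose coordinates with respect to some
ℚ_ℓ-basis of B are ℓ-adic integers. -/
def IsPadicOrder (ℓ : ℕ) [Fact (Nat.Prime ℓ)] (u : ℚ_[ℓ])
    (S : Subring ℍ[ℚ_[ℓ], u, (ℓ : ℚ_[ℓ])]) : Prop :=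
  ∃ b : Module.Basis (Fin 4) ℚ_[ℓ] ℍ[ℚ_[ℓ], u, (ℓ : ℚ_[ℓ])],
    ∀ x, x ∈ S ↔ ∀ i, ‖b.repr x i‖ ≤ 1

/-!
Every `x` in the division algebra satisfies `x² - t x + n = 0` with `t = 2 re x` and
`n = nrd x`. If `‖n‖ < ‖t‖²`, Hensel's lemma gives this quadratic a root in `ℚ_ℓ`; it then
factors in `B`, which has no zero divisors, so `x` would be a scalar, where `‖t‖² ≤ ‖n‖`.
Hence `‖t‖² ≤ ‖n‖`: integral reduced norm forces integral reduced trace. Writing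
`x + y = x (1 + x⁻¹ y)` with `‖nrd y‖ ≤ ‖nrd x‖`, this makes `‖nrd‖` ultrametric, so
`O = {‖nrd‖ ≤ 1}` is a ring. Pairing `x ∈ O` with `i, j, k ∈ O` through the trace bounds its
coordinates, so `O` is a lattice. Conversely, `nrd` is bounded on any order `T`, and
`nrd (x ^ m) = nrd x ^ m` for `x ∈ T` then forces `‖nrd x‖ ≤ 1`.
-/

namespace QuaternionAlgebra

variable {R : Type*} [CommRing R] {c₁ c₂ c₃ : R}

def nrd : ℍ[R,c₁,c₂,c₃] →* R where
  toFun x := (x * star x).re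
  map_one' := by simp
  map_mul' x y := by
    change (x * y * star (x * y)).re = _
    rw [star_mul, mul_assoc, ← mul_assoc y, mul_star_eq_coe y, coe_commutes, ← mul_assoc,
      mul_star_eq_coe x, ← coe_mul]
    simp only [re_coe]

theorem nrd_apply (x : ℍ[R,c₁,c₂,c₃]) : nrd x = (x * star x).re := rfl

theorem coe_nrd (x : ℍ[R,c₁,c₂,c₃]) : ((nrd x : R) : ℍ[R,c₁,c₂,c₃]) = x * star x :=
  (mul_star_eq_coe x).symm

variable (x : ℍ[R,c₁,c₃])

theorem nrd_eq : nrd x = x.re ^ 2 - c₁ * x.imI ^ 2 - c₃ * x.imJ ^ 2 + c₁ * c₃ * x.imK ^ 2 := by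
  simp only [nrd_apply, re_mul, re_star, imI_star, imJ_star, imK_star]
  ring

theorem nrd_coe (r : R) : nrd (r : ℍ[R,c₁,c₃]) = r ^ 2 := by
  simp [nrd_eq]

theorem nrd_one_add : nrd (1 + x) = 1 + 2 * x.re + nrd x := by
  simp only [nrd_eq, re_add, imI_add, imJ_add, imK_add, re_one, imI_one, imJ_one, imK_one]
  ring

theorem mul_self_sub_add_nrd : x * x - ((2 * x.re : R) : ℍ[R,c₁,c₃]) * x + (nrd x : R) = 0 := by
  rw [coe_nrd, ← star_comm_self', show ((2 * x.re : R) : ℍ[R,c₁,c₃]) = x + star x by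
    rw [self_add_star', zero_mul, add_zero]]
  noncomm_ring

end QuaternionAlgebra

theorem PadicInt.exists_sq_sub_self_add_eq_zero {p : ℕ} [Fact p.Prime] {m : ℤ_[p]}
    (hm : ‖m‖ < 1) : ∃ y : ℤ_[p], y ^ 2 - y + m = 0 := by
  open Polynomial in
  have hF : ‖(X ^ 2 - X + C m).eval 1‖ < ‖(derivative (X ^ 2 - X + C m)).eval 1‖ ^ 2 := by
    simpa using hm
  obtain ⟨y, hy, -⟩ := hensels_lemma hF
  exact ⟨y, by simpa using hy⟩

/-- Substituting `r = t y` reduces this to `y² - y + n / t² = 0`, whose coefficients are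
integral with `‖n / t²‖ < 1`. -/
theorem Padic.exists_sq_sub_mul_add_eq_zero {p : ℕ} [Fact p.Prime] {t n : ℚ_[p]}
    (h : ‖n‖ < ‖t‖ ^ 2) : ∃ r : ℚ_[p], r ^ 2 - t * r + n = 0 := by
  have ht : t ≠ 0 := by
    rintro rfl
    exact (norm_nonneg n).not_gt (by simpa using h)
  have hm : ‖n / t ^ 2‖ < 1 := by
    rwa [norm_div, norm_pow, div_lt_one (by positivity)]
  obtain ⟨y, hy⟩ := PadicInt.exists_sq_sub_self_add_eq_zero (m := ⟨n / t ^ 2, hm.le⟩) hm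
  refine ⟨t * y, ?_⟩
  have hy' : (y : ℚ_[p]) ^ 2 - y + n / t ^ 2 = 0 := congrArg ((↑) : ℤ_[p] → ℚ_[p]) hy
  field_simp at hy'
  linear_combination hy'

open Module Submodule

theorem Module.Basis.norm_apply_le_of_norm_repr_le_one {ι K V : Type*} [Fintype ι]
    [NormedField K] [AddCommGroup V] [Module K V] (b : Basis ι K V) (f : V →ₗ[K] K) {x : V}
    (hx : ∀ i, ‖b.repr x i‖ ≤ 1) : ‖f x‖ ≤ ∑ i, ‖f (b i)‖ := by
  conv_lhs => rw [← b.sum_repr x]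
  simp only [map_sum, map_smul, smul_eq_mul]
  refine (norm_sum_le _ _).trans (Finset.sum_le_sum fun i _ => ?_)
  rw [norm_mul]
  exact mul_le_of_le_one_left (norm_nonneg _) (hx i)

section Padic

variable {p : ℕ} [Fact p.Prime] {V : Type*} [AddCommGroup V] [Module ℚ_[p] V] [Module ℤ_[p] V]
  [IsScalarTower ℤ_[p] ℚ_[p] V]

theorem Module.Basis.mem_span_range_iff_norm_repr_le_one {ι : Type*} [Fintype ι]
    (b : Basis ι ℚ_[p] V) {x : V} :
    x ∈ span ℤ_[p] (Set.range b) ↔ ∀ i, ‖b.repr x i‖ ≤ 1 := by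
  have smul_eq (c : ι → ℤ_[p]) : ∑ i, c i • b i = ∑ i, (c i : ℚ_[p]) • b i :=
    Finset.sum_congr rfl fun i _ => (algebraMap_smul ℚ_[p] (c i) (b i)).symm
  rw [mem_span_range_iff_exists_fun]
  constructor
  · rintro ⟨c, rfl⟩ i
    rw [smul_eq, b.repr_sum_self]
    exact (c i).norm_le_one
  · intro hx
    exact ⟨fun i => (⟨b.repr x i, hx i⟩ : ℤ_[p]), (smul_eq _).trans (b.sum_repr x)⟩

theorem Submodule.IsLattice.exists_basis_mem_iff_norm_repr_le_one (M : Submodule ℤ_[p] V)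
    [IsLattice ℚ_[p] M] {n : ℕ} (hn : finrank ℚ_[p] V = n) :
    ∃ b : Basis (Fin n) ℚ_[p] V, ∀ x, x ∈ M ↔ ∀ i, ‖b.repr x i‖ ≤ 1 := by
  let e := Free.chooseBasis ℤ_[p] M
  let b := e.extendOfIsLattice ℚ_[p]
  have hM : span ℤ_[p] (Set.range b) = M := by
    have : Set.range b = M.subtype '' Set.range e := by
      rw [← Set.range_comp]; ext; simp [b]
    rw [this, ← map_span, e.span_eq, map_top, range_subtype]
  refine ⟨b.reindex (Fintype.equivFinOfCardEq ((finrank_eq_card_basis b).symm.trans hn)),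
    fun x => ?_⟩
  rw [← Basis.mem_span_range_iff_norm_repr_le_one, b.range_reindex, hM]

end Padic

namespace QuaternionAlgebra

open IsUltrametricDist

variable {p : ℕ} [Fact p.Prime] {a b : ℚ_[p]}

section Bounded

variable (ha : ‖a‖ ≤ 1) (hb : ‖b‖ ≤ 1)
include ha hb

theorem norm_nrd_le_sq {x : ℍ[ℚ_[p], a, b]} {C : ℝ} (hre : ‖x.re‖ ≤ C) (hI : ‖x.imI‖ ≤ C)
    (hJ : ‖x.imJ‖ ≤ C) (hK : ‖x.imK‖ ≤ C) : ‖nrd x‖ ≤ C ^ 2 := by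
  have term {c y : ℚ_[p]} (hc : ‖c‖ ≤ 1) (hy : ‖y‖ ≤ C) : ‖c * y ^ 2‖ ≤ C ^ 2 := by
    rw [norm_mul, norm_pow]
    exact (mul_le_of_le_one_left (by positivity) hc).trans (pow_le_pow_left₀ (norm_nonneg _) hy 2)
  have hnrd : nrd x = 1 * x.re ^ 2 + -a * x.imI ^ 2 + -b * x.imJ ^ 2 + a * b * x.imK ^ 2 := by
    rw [nrd_eq]; ring
  rw [hnrd]
  refine (norm_add_le_max _ _).trans (max_le ((norm_add_le_max _ _).trans
    (max_le ((norm_add_le_max _ _).trans (max_le ?_ ?_)) ?_)) ?_)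
  · exact term (by simp) hre
  · exact term (by simpa using ha) hI
  · exact term (by simpa using hb) hJ
  · exact term (by simpa using mul_le_one₀ ha (norm_nonneg _) hb) hK

theorem exists_norm_nrd_le {ι : Type*} [Fintype ι] (β : Module.Basis ι ℚ_[p] ℍ[ℚ_[p], a, b]) :
    ∃ C, ∀ x, (∀ i, ‖β.repr x i‖ ≤ 1) → ‖nrd x‖ ≤ C := by
  let B (f : ℍ[ℚ_[p], a, b] →ₗ[ℚ_[p]] ℚ_[p]) : ℝ := ∑ i, ‖f (β i)‖
  let C := max (max (B (reₗ a 0 b)) (B (imIₗ a 0 b))) (max (B (imJₗ a 0 b)) (B (imKₗ a 0 b)))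
  refine ⟨C ^ 2, fun x hx => ?_⟩
  have hB (f : ℍ[ℚ_[p], a, b] →ₗ[ℚ_[p]] ℚ_[p]) : ‖f x‖ ≤ B f :=
    β.norm_apply_le_of_norm_repr_le_one f hx
  exact norm_nrd_le_sq ha hb ((hB (reₗ a 0 b)).trans (by simp [C]))
    ((hB (imIₗ a 0 b)).trans (by simp [C])) ((hB (imJₗ a 0 b)).trans (by simp [C]))
    ((hB (imKₗ a 0 b)).trans (by simp [C]))

end Bounded

variable (hdiv : ∀ x : ℍ[ℚ_[p], a, b], x ≠ 0 → IsUnit x)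
include hdiv

theorem exists_eq_coe_of_sub_mul_sub_eq_zero {x : ℍ[ℚ_[p], a, b]} {r s : ℚ_[p]}
    (h : (x - r) * (x - s) = 0) : ∃ q : ℚ_[p], x = q := by
  rcases eq_or_ne (x - r) 0 with hr | hr
  · exact ⟨r, sub_eq_zero.mp hr⟩
  · exact ⟨s, sub_eq_zero.mp (((hdiv _ hr).mul_right_eq_zero).mp h)⟩

theorem norm_two_mul_re_sq_le (x : ℍ[ℚ_[p], a, b]) : ‖2 * x.re‖ ^ 2 ≤ ‖nrd x‖ := by
  by_contra! h
  obtain ⟨r, hr⟩ := Padic.exists_sq_sub_mul_add_eq_zero h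
  set s := 2 * x.re - r
  have hfactor : (x - r) * (x - s) = 0 := by
    rw [← mul_self_sub_add_nrd x, show 2 * x.re = r + s by ring,
      show nrd x = r * s by linear_combination hr, sub_mul, mul_sub, mul_sub,
      ← coe_commutes s x, coe_add, coe_mul]
    noncomm_ring
  obtain ⟨q, rfl⟩ := exists_eq_coe_of_sub_mul_sub_eq_zero hdiv hfactor
  rw [re_coe, nrd_coe, norm_mul, norm_pow, mul_pow] at h
  have h2 : ‖(2 : ℚ_[p])‖ ≤ 1 := by exact_mod_cast (2 : ℤ_[p]).norm_le_one
  exact h.not_ge (mul_le_of_le_one_left (by positivity) (pow_le_one₀ (norm_nonneg _) h2))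

theorem norm_two_mul_re_le_one {x : ℍ[ℚ_[p], a, b]} (hx : ‖nrd x‖ ≤ 1) : ‖2 * x.re‖ ≤ 1 :=
  (sq_le_one_iff₀ (norm_nonneg _)).mp ((norm_two_mul_re_sq_le hdiv x).trans hx)

theorem norm_nrd_add_le (x y : ℍ[ℚ_[p], a, b]) : ‖nrd (x + y)‖ ≤ max ‖nrd x‖ ‖nrd y‖ := by
  wlog hyx : ‖nrd y‖ ≤ ‖nrd x‖ generalizing x y
  · rw [add_comm, max_comm]
    exact this y x (le_of_not_ge hyx)
  rcases eq_or_ne x 0 with rfl | hx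
  · simp
  obtain ⟨w, rfl⟩ := hdiv x hx
  set z := ((w⁻¹ : (ℍ[ℚ_[p], a, b])ˣ) : ℍ[ℚ_[p], a, b]) * y
  have hwz : (w : ℍ[ℚ_[p], a, b]) * z = y := by simp [z]
  have hnw : 0 < ‖nrd (w : ℍ[ℚ_[p], a, b])‖ := norm_pos_iff.mpr (w.isUnit.map nrd).ne_zero
  have hz : ‖nrd z‖ ≤ 1 := by
    rw [← hwz, map_mul, norm_mul] at hyx
    exact le_of_mul_le_mul_left (by simpa using hyx) hnw
  have h1z : ‖nrd (1 + z)‖ ≤ 1 := by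
    rw [nrd_one_add]
    refine (norm_add_le_max _ _).trans
      (max_le ((norm_add_le_max _ _).trans (max_le ?_ ?_)) hz)
    · simp
    · exact norm_two_mul_re_le_one hdiv hz
  calc ‖nrd (↑w + y)‖ = ‖nrd (w : ℍ[ℚ_[p], a, b])‖ * ‖nrd (1 + z)‖ := by
        rw [← norm_mul, ← map_mul, mul_add, mul_one, hwz]
    _ ≤ ‖nrd (w : ℍ[ℚ_[p], a, b])‖ := mul_le_of_le_one_right (norm_nonneg _) h1z
    _ ≤ _ := le_max_left _ _

def nrdIntegers : Subalgebra ℤ_[p] ℍ[ℚ_[p], a, b] where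
  carrier := {x | ‖nrd x‖ ≤ 1}
  mul_mem' {x y} hx hy := by
    simp only [Set.mem_ofPred_eq, map_mul, norm_mul] at *
    exact mul_le_one₀ hx (norm_nonneg _) hy
  add_mem' hx hy := (norm_nrd_add_le hdiv _ _).trans (max_le hx hy)
  algebraMap_mem' z := by
    change ‖nrd ((z : ℚ_[p]) : ℍ[ℚ_[p], a, b])‖ ≤ 1
    rw [nrd_coe, norm_pow]
    exact pow_le_one₀ (norm_nonneg _) z.norm_le_one

theorem mem_nrdIntegers {x : ℍ[ℚ_[p], a, b]} : x ∈ nrdIntegers hdiv ↔ ‖nrd x‖ ≤ 1 := Iff.rfl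

variable (ha : ‖a‖ ≤ 1) (hb : ‖b‖ ≤ 1)
include ha hb

theorem le_nrdIntegers {ι : Type*} [Fintype ι]
    (T : Subring ℍ[ℚ_[p], a, b]) (β : Module.Basis ι ℚ_[p] ℍ[ℚ_[p], a, b])
    (hT : ∀ x ∈ T, ∀ i, ‖β.repr x i‖ ≤ 1) : T ≤ (nrdIntegers hdiv).toSubring := by
  obtain ⟨C, hC⟩ := exists_norm_nrd_le ha hb β
  intro x hx
  by_contra h
  rw [Subalgebra.mem_toSubring, mem_nrdIntegers, not_le] at h
  obtain ⟨m, hm⟩ := pow_unbounded_of_one_lt C h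
  have hxm := hC (x ^ m) (hT _ (pow_mem hx m))
  rw [map_pow, norm_pow] at hxm
  exact hm.not_ge hxm

theorem basisOneIJK_mem_nrdIntegers (i : Fin 4) : basisOneIJK a 0 b i ∈ nrdIntegers hdiv := by
  fin_cases i <;> simp [mem_nrdIntegers, nrd_eq, basisOneIJK, ha, hb,
    mul_le_one₀ ha (norm_nonneg _) hb]

theorem norm_two_mul_mul_repr_le_one {x : ℍ[ℚ_[p], a, b]} (hx : x ∈ nrdIntegers hdiv)
    (i : Fin 4) : ‖2 * a * b * (basisOneIJK a 0 b).repr x i‖ ≤ 1 := by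
  have htrace : ‖2 * (x * basisOneIJK a 0 b i).re‖ ≤ 1 :=
    norm_two_mul_re_le_one hdiv ((nrdIntegers hdiv).mul_mem hx
      (basisOneIJK_mem_nrdIntegers hdiv ha hb i))
  have hcoord : 2 * a * b * (basisOneIJK a 0 b).repr x i
      = ![a * b, b, a, -1] i * (2 * (x * basisOneIJK a 0 b i).re) := by
    fin_cases i <;> simp [basisOneIJK] <;> ring
  have hc : ‖![a * b, b, a, -1] i‖ ≤ 1 := by
    fin_cases i <;> simp [ha, hb, mul_le_one₀ ha (norm_nonneg _) hb]
  rw [hcoord, norm_mul]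
  exact mul_le_one₀ hc (norm_nonneg _) htrace

variable (ha0 : a ≠ 0) (hb0 : b ≠ 0)
include ha0 hb0

theorem nrdIntegers_le_span :
    Subalgebra.toSubmodule (nrdIntegers hdiv) ≤ span ℤ_[p] (Set.range
      ((basisOneIJK a 0 b).unitsSMul fun _ => (Units.mk0 (2 * a * b) (by simp [ha0, hb0]))⁻¹)) := by
  intro x hx
  rw [Basis.mem_span_range_iff_norm_repr_le_one]
  intro i
  simpa [Basis.repr_unitsSMul, Units.smul_def] using norm_two_mul_mul_repr_le_one hdiv ha hb hx i

theorem isLattice_nrdIntegers : IsLattice ℚ_[p] (Subalgebra.toSubmodule (nrdIntegers hdiv)) where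
  fg := (fg_span (Set.finite_range _)).of_le (nrdIntegers_le_span hdiv ha hb ha0 hb0)
  span_eq_top := eq_top_iff.mpr <| (basisOneIJK a 0 b).span_eq.ge.trans <|
    span_mono (Set.range_subset_iff.mpr (basisOneIJK_mem_nrdIntegers hdiv ha hb))

end QuaternionAlgebra

open QuaternionAlgebra in
/-- Let B be the division quaternion algebra over ℚ_ℓ with valuation
w = ν ∘ Nrd. Then O = {x ∈ B : w(x) ≥ 0} ∪ {0} is a subring of B, and it is the
unique maximal order of B (it contains every order). -/
theorem stmt3 (ℓ : ℕ) [Fact (Nat.Prime ℓ)] (u : ℚ_[ℓ]) (hu : ‖u‖ = 1)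
    (hdiv : ∀ x : ℍ[ℚ_[ℓ], u, (ℓ : ℚ_[ℓ])], x ≠ 0 → IsUnit x) :
    ∃ S : Subring ℍ[ℚ_[ℓ], u, (ℓ : ℚ_[ℓ])],
      (S : Set ℍ[ℚ_[ℓ], u, (ℓ : ℚ_[ℓ])])
        = {x | x = 0 ∨ 0 ≤ ((x * star x).re).valuation} ∧
      IsPadicOrder ℓ u S ∧
      ∀ T : Subring ℍ[ℚ_[ℓ], u, (ℓ : ℚ_[ℓ])], IsPadicOrder ℓ u T → T ≤ S := by
  have hu0 : u ≠ 0 := norm_ne_zero_iff.mp (by simp [hu])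
  have hℓ : ‖(ℓ : ℚ_[ℓ])‖ ≤ 1 := by exact_mod_cast (ℓ : ℤ_[ℓ]).norm_le_one
  have hℓ0 : (ℓ : ℚ_[ℓ]) ≠ 0 := Nat.cast_ne_zero.mpr (Fact.out : ℓ.Prime).ne_zero
  refine ⟨(nrdIntegers hdiv).toSubring, ?_, ?_, fun T ⟨β, hβ⟩ => ?_⟩
  · ext x
    rw [SetLike.mem_coe, Subalgebra.mem_toSubring, mem_nrdIntegers, nrd_apply,
      Padic.norm_le_one_iff_val_nonneg]
    refine ⟨Or.inr, ?_⟩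
    rintro (rfl | h)
    · simp
    · exact h
  · have := isLattice_nrdIntegers hdiv hu.le hℓ hu0 hℓ0
    obtain ⟨β, hβ⟩ := IsLattice.exists_basis_mem_iff_norm_repr_le_one
      (Subalgebra.toSubmodule (nrdIntegers hdiv)) (finrank_eq_four _ _ _)
    exact ⟨β, hβ⟩
  · exact le_nrdIntegers hdiv hu.le hℓ T β fun x hx => (hβ x).mp hx
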